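/- Let A = (E, ≤, ↗, λ) be an asymmetric event structure and X ⊆ E a combinable set of events. Then A and its folding A/X are history preserving bisimilar; i.e., the folding operation on AESs preserves hp-bisimilarity. -/

import Mathlib

/-- Restriction of a binary relation to a set. -/
def RelRestrict {G : Type*} (r : G → G → Prop) (S : Set G) : G → G → Prop :=
  fun a b => a ∈ S ∧ b ∈ S ∧ r a b

/-- A binary relation is acyclic on a set: there is no cycle lying within the set. -/
def AcyclicOn {G : Type*} (r : G → G → Prop) (S : Set G) : Prop :=
  ∀ x, ¬ Relation.TransGen (RelRestrict r S) x x

/-- The data of a labelled asymmetric event structure (AES). -/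
structure AES (E : Type*) (Λ : Type*) where
  le : E → E → Prop
  ac : E → E → Prop
  lab : E → Λ

namespace AES

variable {E : Type*} {Λ : Type*}

/-- Strict causality. -/
def lt (A : AES E Λ) (e e' : E) : Prop := A.le e e' ∧ e ≠ e'

/-- The set of causes `⌊e⌋`. -/
def causes (A : AES E Λ) (e : E) : Set E := {e' | A.le e' e}

/-- `⌊Y⌋`, the causes of a set of events. -/
def causesSet (A : AES E Λ) (Y : Set E) : Set E := ⋃ y ∈ Y, A.causes y

/-- The axioms making the data an asymmetric event structure. -/
structure IsAES (A : AES E Λ) : Prop where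
  le_refl : ∀ e, A.le e e
  le_trans : ∀ e e' e'', A.le e e' → A.le e' e'' → A.le e e''
  le_antisymm : ∀ e e', A.le e e' → A.le e' e → e = e'
  causes_finite : ∀ e, (A.causes e).Finite
  lt_ac : ∀ e e', A.lt e e' → A.ac e e'
  ac_heredity : ∀ e e' e'', A.ac e e' → A.lt e' e'' → A.ac e e''
  ac_acyclic : ∀ e, AcyclicOn A.ac (A.causes e)
  cyclic_ac : ∀ e e', ¬ AcyclicOn A.ac (A.causes e ∪ A.causes e') → A.ac e e'

/-- Conflict on sets of events, inductively generated from cycles of asymmetric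
conflict and closed under hereditarity along causality. -/
inductive SetConflict (A : AES E Λ) : Set E → Prop
  | cycle (e : E) (l : List E) : List.Chain A.ac e (l ++ [e]) →
      SetConflict A {x | x ∈ e :: l}
  | heredity (Y : Set E) (e e' : E) :
      SetConflict A (Y ∪ {e}) → A.le e e' → SetConflict A (Y ∪ {e'})

/-- Binary conflict `e # e'`. -/
def Conflict (A : AES E Λ) (e e' : E) : Prop := A.SetConflict {e, e'}

/-- A set of events is consistent if it contains no two events in conflict. -/
def ConsistentSet (A : AES E Λ) (Y : Set E) : Prop :=
  ∀ e ∈ Y, ∀ e' ∈ Y, ¬ A.Conflict e e'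

/-- Immediate causality `e' <_μ e`. -/
def ltMu (A : AES E Λ) (e' e : E) : Prop :=
  A.lt e' e ∧ ¬ ∃ e'', A.lt e' e'' ∧ A.lt e'' e

/-- Direct asymmetric conflict `e ↗_μ e''`. -/
def acMu (A : AES E Λ) (e e'' : E) : Prop :=
  A.ac e e'' ∧ ¬ ∃ e', A.ac e e' ∧ A.lt e' e''

/-- Direct binary conflict `e #_μ e'`. -/
def confMu (A : AES E Λ) (e e' : E) : Prop := A.acMu e e' ∧ A.acMu e' e

/-- Configurations: finite, causally closed and free of asymmetric-conflict cycles. -/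
def Config (A : AES E Λ) (C : Set E) : Prop :=
  C.Finite ∧ (∀ e ∈ C, A.causes e ⊆ C) ∧ AcyclicOn A.ac C

/-- Similar sets of events. -/
def Similar (A : AES E Λ) (X : Set E) : Prop :=
  ∀ e ∈ X, ∀ e' ∈ X,
    A.lab e = A.lab e' ∧ (e ≠ e' → A.Conflict e e') ∧
    ∀ e'', e'' ∉ X →
      (A.ac e e'' → (A.ac e' e'' ∨ A.ac e'' e)) ∧
      (A.acMu e'' e → A.ac e'' e')

/-- The strict causes `S(X)`. -/
def strictCauses (A : AES E Λ) (X : Set E) : Set E := {e' | ∀ e ∈ X, A.lt e' e}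

/-- The weak predecessors `W(X)`. -/
def weakPred (A : AES E Λ) (X : Set E) : Set E :=
  {e'' | ∃ e ∈ X, ∃ e' ∈ X, A.ac e'' e ∧ ¬ A.ac e' e''} \ (A.strictCauses X ∪ X)

/-- The history `C⟦e⟧` of `e` in a configuration `C`. -/
def history (A : AES E Λ) (C : Set E) (e : E) : Set E :=
  {e' | e' ∈ C ∧ Relation.ReflTransGen (RelRestrict A.ac C) e' e}

/-- The set of possible histories of `e`. -/
def Hist (A : AES E Λ) (e : E) : Set (Set E) :=
  {h | ∃ C, A.Config C ∧ e ∈ C ∧ h = A.history C e}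

/-- Combinable sets of events. -/
def Combinable (A : AES E Λ) (X : Set E) : Prop :=
  A.Similar X ∧
  ∀ Y, Y ⊆ A.weakPred X → A.ConsistentSet Y →
    ∃ e ∈ X, (∀ e' ∈ Y, ¬ A.ac e e') ∧
      ∃ h ∈ A.Hist e, h \ {e} ⊆ A.strictCauses X ∪ A.causesSet Y

/-- The carrier of the folded structure: `(E \ X) ∪ {e_X}`, where the fresh
event `e_X` is encoded as `none`. -/
def foldCarrier (X : Set E) : Set (Option E) :=
  {x | x = none ∨ ∃ e, e ∉ X ∧ x = some e}

/-- Causality of the folded structure. -/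
def foldLe (A : AES E Λ) (X : Set E) : Option E → Option E → Prop
  | some e, some e' => e ∉ X ∧ e' ∉ X ∧ A.le e e'
  | some e, none => e ∈ A.strictCauses X
  | none, some e => e ∉ X ∧ ∃ e' ∈ X, A.lt e' e
  | none, none => True

/-- Asymmetric conflict of the folded structure. -/
def foldAc (A : AES E Λ) (X : Set E) : Option E → Option E → Prop
  | some e, some e' => e ∉ X ∧ e' ∉ X ∧ A.ac e e'
  | some e', none => e' ∉ X ∧ ∀ e ∈ X, A.ac e' e
  | none, some e' => e' ∉ X ∧ ∀ e ∈ X, A.ac e e'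
  | none, none => False

open Classical in
/-- Labelling of the folded structure. -/
noncomputable def foldLab [Inhabited Λ] (A : AES E Λ) (X : Set E) : Option E → Λ
  | some e => A.lab e
  | none => if h : X.Nonempty then A.lab h.some else default

open Classical in
/-- The folding morphism `f : E → E/X`. -/
noncomputable def foldMap (X : Set E) : E → Option E :=
  fun e => if e ∈ X then none else some e

end AES

/-- An event structure with asymmetric conflict, presented with an explicit
carrier set of events (used for the folded structure, whose events form a
subset of `Option E`). -/
structure ES (G : Type*) (Λ : Type*) where
  carrier : Set G
  le : G → G → Prop
  ac : G → G → Prop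
  lab : G → Λ

namespace ES

variable {G : Type*} {Λ : Type*}

/-- Configurations: finite, causally closed subsets of the carrier on which
asymmetric conflict is acyclic. -/
def Config (D : ES G Λ) (C : Set G) : Prop :=
  C ⊆ D.carrier ∧ C.Finite ∧ (∀ x ∈ C, ∀ y ∈ D.carrier, D.le y x → y ∈ C) ∧
  AcyclicOn D.ac C

/-- The extension order on configurations: `C₁ ⊑ C₂` iff `C₁ ⊆ C₂` and no event
of `C₂ \ C₁` is in asymmetric conflict with an event of `C₁`. -/
def Extends (D : ES G Λ) (C₁ C₂ : Set G) : Prop :=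
  C₁ ⊆ C₂ ∧ ∀ e ∈ C₁, ∀ e' ∈ C₂, e' ∉ C₁ → ¬ D.ac e' e

end ES

/-- `g` is a label-preserving isomorphism between the configuration `C₁` of
`D₁`, ordered by `(↗₁|_{C₁})*`, and the configuration `C₂` of `D₂`, ordered by
`(↗₂|_{C₂})*`. -/
def IsPosetIso {G₁ G₂ Λ : Type*} (D₁ : ES G₁ Λ) (D₂ : ES G₂ Λ)
    (C₁ : Set G₁) (C₂ : Set G₂) (g : G₁ → G₂) : Prop :=
  Set.InjOn g C₁ ∧ g '' C₁ = C₂ ∧ (∀ e ∈ C₁, D₂.lab (g e) = D₁.lab e) ∧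
  ∀ e ∈ C₁, ∀ e' ∈ C₁,
    (Relation.ReflTransGen (RelRestrict D₁.ac C₁) e e' ↔
      Relation.ReflTransGen (RelRestrict D₂.ac C₂) (g e) (g e'))

/-- History preserving bisimulations between (asymmetric) event structures:
sets of triples `(C₁, g, C₂)` of configurations related by a label-preserving
order isomorphism `g`, containing the empty triple, such that every one-event
extension on either side can be matched on the other side by an equally
labelled event, extending the isomorphism. -/
def IsHpBisim {G₁ G₂ Λ : Type*} (D₁ : ES G₁ Λ) (D₂ : ES G₂ Λ)
    (R : Set (Set G₁ × (G₁ → G₂) × Set G₂)) : Prop :=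
  (∀ t ∈ R, D₁.Config t.1 ∧ D₂.Config t.2.2 ∧ IsPosetIso D₁ D₂ t.1 t.2.2 t.2.1) ∧
  (∃ g, ((∅ : Set G₁), g, (∅ : Set G₂)) ∈ R) ∧
  ∀ C₁ g C₂, (C₁, g, C₂) ∈ R →
    (∀ e₁ ∈ D₁.carrier, D₁.Extends C₁ (C₁ ∪ {e₁}) → D₁.Config (C₁ ∪ {e₁}) →
      ∃ e₂ ∈ D₂.carrier, D₂.lab e₂ = D₁.lab e₁ ∧
        ∃ g', (∀ x ∈ C₁, g' x = g x) ∧ (C₁ ∪ {e₁}, g', C₂ ∪ {e₂}) ∈ R) ∧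
    (∀ e₂ ∈ D₂.carrier, D₂.Extends C₂ (C₂ ∪ {e₂}) → D₂.Config (C₂ ∪ {e₂}) →
      ∃ e₁ ∈ D₁.carrier, D₁.lab e₁ = D₂.lab e₂ ∧
        ∃ g', (∀ x ∈ C₁, g' x = g x) ∧ (C₁ ∪ {e₁}, g', C₂ ∪ {e₂}) ∈ R)

namespace AES

variable {E : Type*} {Λ : Type*}

/-- An AES viewed as a carrier-based event structure (carrier: all events). -/
def toES (A : AES E Λ) : ES E Λ := ⟨Set.univ, A.le, A.ac, A.lab⟩

/-- The folded structure `A/X` as a carrier-based event structure. -/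
noncomputable def foldES [Inhabited Λ] (A : AES E Λ) (X : Set E) : ES (Option E) Λ :=
  ⟨foldCarrier X, A.foldLe X, A.foldAc X, A.foldLab X⟩

end AES

/-! The bisimulation relates each configuration `C` of `A` to its image under the folding
morphism `f`. Events of `X` are pairwise in conflict, so a configuration contains at most one of
them and `f` is injective on `C`. A step `a ↗ b` from outside `X` into `X` becomes a single step
into `e_X` when `a ↗_μ b` (this is where similarity is used), and otherwise a step `a ↗ c` to a
cause `c < b`, which is iterated by well-founded induction along `↗` in `C`; hence `f` is an
isomorphism of histories. Extensions of `C` map to extensions of `f C`. Conversely, an extension of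
`f C` by an event outside `X` lifts as it is, and an extension by `e_X` is matched by the event of
`X` that combinability provides for the consistent set `W(X) ∩ C`. -/

open Relation Set

section Relations

variable {α β : Type*} {r : α → α → Prop} {S : Set α}

theorem transGen_relRestrict_mem {x y : α} (h : TransGen (RelRestrict r S) x y) :
    x ∈ S ∧ y ∈ S := by
  induction h with
  | single h => exact ⟨h.1, h.2.1⟩
  | tail _ h ih => exact ⟨ih.1, h.2.1⟩

theorem List.Chain.transGen_relRestrict {e : α} :
    ∀ (l : List α) {a : α}, List.Chain r a (l ++ [e]) → a ∈ S → (∀ x ∈ l, x ∈ S) → e ∈ S →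
      TransGen (RelRestrict r S) a e
  | [], _, .cons_cons h _, ha, _, he => .single ⟨ha, he, h⟩
  | b :: l, _, .cons_cons h hl, ha, hS, he =>
      have hb : b ∈ S := hS b List.mem_cons_self
      .head ⟨ha, hb, h⟩ (transGen_relRestrict l hl hb (fun x hx => hS x (.tail b hx)) he)

theorem Relation.TransGen.relRestrict_of_image {s : β → β → Prop} {φ : α → β}
    (hrs : ∀ a b, s (φ a) (φ b) → r a b) {a b : α} (ha : a ∈ S) (hb : b ∈ S)
    (h : TransGen (RelRestrict s (φ '' S)) (φ a) (φ b)) : TransGen (RelRestrict r S) a b := by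
  generalize hv : φ b = v at h
  induction h generalizing b with
  | single h => exact .single ⟨ha, hb, hrs a b (hv ▸ h.2.2)⟩
  | tail _ hwv ih =>
      obtain ⟨c, hc, rfl⟩ := hwv.1
      exact .tail (ih hc rfl) ⟨hc, hb, hrs c b (hv ▸ hwv.2.2)⟩

theorem AcyclicOn.image {s : β → β → Prop} {φ : α → β} (hrs : ∀ a b, s (φ a) (φ b) → r a b)
    (h : AcyclicOn r S) : AcyclicOn s (φ '' S) := by
  intro u hu
  obtain ⟨a, ha, rfl⟩ := (transGen_relRestrict_mem hu).1
  exact h a (hu.relRestrict_of_image hrs ha ha)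

theorem AcyclicOn.union_singleton (h : AcyclicOn r S) {e : α} (hee : ¬ r e e)
    (hout : ∀ c ∈ S, ¬ r e c) : AcyclicOn r (S ∪ {e}) := by
  have hsource : ∀ u v, RelRestrict r (S ∪ {e}) u v → u ∈ S := by
    rintro u v ⟨hu | rfl, hv | rfl, huv⟩
    exacts [hu, hu, (hout v hv huv).elim, (hee huv).elim]
  have hpath : ∀ x y, TransGen (RelRestrict r (S ∪ {e})) x y → y ∈ S →
      TransGen (RelRestrict r S) x y := by
    intro x y hxy
    induction hxy with
    | single hxy => exact fun hy => .single ⟨hsource _ _ hxy, hy, hxy.2.2⟩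
    | tail _ hby ih =>
        have hb := hsource _ _ hby
        exact fun hy => .tail (ih hb) ⟨hb, hy, hby.2.2⟩
  intro x hx
  obtain ⟨c, hxc, -⟩ := TransGen.head'_iff.mp hx
  exact h x (hpath x x hx (hsource x c hxc))

theorem AcyclicOn.mono {T : Set α} (hST : S ⊆ T) (h : AcyclicOn r T) : AcyclicOn r S :=
  fun x hx => h x (TransGen.mono (fun _ _ hab => ⟨hST hab.1, hST hab.2.1, hab.2.2⟩) x x hx)

theorem AcyclicOn.wellFounded_flip (hfin : S.Finite) (h : AcyclicOn r S) :
    WellFounded (flip (RelRestrict r S)) := by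
  let _ : IsStrictOrder α (flip (TransGen (RelRestrict r S))) :=
    { irrefl := h, trans := fun _ _ _ hab hbc => hbc.trans hab }
  exact Subrelation.wf (fun hab => ⟨.single hab, hab.2.1, hab.1⟩)
    (wellFoundedOn_iff.mp (hfin.wellFoundedOn (r := flip (TransGen (RelRestrict r S)))))

end Relations

namespace AES

variable {E Λ : Type*} {A : AES E Λ} {C X : Set E}

theorem IsAES.ac_irrefl (hA : A.IsAES) (e : E) : ¬ A.ac e e := fun h =>
  hA.ac_acyclic e e (.single ⟨hA.le_refl e, hA.le_refl e, h⟩)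

theorem IsAES.causesSet_mono (hA : A.IsAES) {Y : Set E} {e e' : E} (hle : A.le e e') :
    A.causesSet (Y ∪ {e}) ⊆ A.causesSet (Y ∪ {e'}) := by
  simp only [causesSet, union_singleton, biUnion_insert]
  exact union_subset_union_left _ fun z hz => hA.le_trans z e e' hz hle

theorem IsAES.not_acyclicOn_causesSet_of_setConflict (hA : A.IsAES) {Z : Set E}
    (hZ : A.SetConflict Z) : ¬ AcyclicOn A.ac (A.causesSet Z) := by
  induction hZ with
  | cycle e l hch =>
      have hmem : ∀ x ∈ e :: l, x ∈ A.causesSet {y | y ∈ e :: l} :=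
        fun x hx => mem_biUnion hx (hA.le_refl x)
      exact fun hacy => hacy e (hch.transGen_relRestrict l (hmem e List.mem_cons_self)
        (fun x hx => hmem x (.tail e hx)) (hmem e List.mem_cons_self))
  | heredity Y e e' _ hle ih =>
      exact fun hacy => ih (hacy.mono (hA.causesSet_mono hle))

theorem IsAES.ac_of_conflict (hA : A.IsAES) {a b : E} (h : A.Conflict a b) : A.ac a b :=
  hA.cyclic_ac a b (by simpa [causesSet] using hA.not_acyclicOn_causesSet_of_setConflict h)

theorem conflict_of_le {z x e : E} (h : A.Conflict z x) (hle : A.le z e) : A.Conflict e x := by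
  have := SetConflict.heredity {x} z e (by rw [union_singleton]; exact h) hle
  rwa [union_singleton] at this

theorem IsAES.mem_hist_diff_of_lt (hA : A.IsAES) {h : Set E} {e z : E} (hh : h ∈ A.Hist e)
    (hz : A.lt z e) : z ∈ h \ {e} := by
  obtain ⟨C', hC', heC', rfl⟩ := hh
  have hzC' : z ∈ C' := hC'.2.1 e heC' hz.1
  exact ⟨⟨hzC', .single ⟨hzC', heC', hA.lt_ac z e hz⟩⟩, hz.2⟩

theorem Config.not_subset_of_setConflict (hC : A.Config C) {Z : Set E} (hZ : A.SetConflict Z) :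
    ¬ Z ⊆ C := by
  induction hZ with
  | cycle e l hch =>
      intro hsub
      have he : e ∈ C := hsub List.mem_cons_self
      exact hC.2.2 e (hch.transGen_relRestrict l he (fun x hx => hsub (.tail e hx)) he)
  | heredity Y e e' _ hle ih =>
      intro hsub
      have he : e ∈ C := hC.2.1 e' (hsub (mem_union_right _ rfl)) hle
      exact ih (union_subset (subset_union_left.trans hsub) (singleton_subset_iff.mpr he))

theorem Config.consistentSet (hC : A.Config C) {Y : Set E} (hY : Y ⊆ C) : A.ConsistentSet Y :=
  fun _ ha _ hb hab => hC.not_subset_of_setConflict hab (pair_subset (hY ha) (hY hb))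

theorem Config.causesSet_subset (hC : A.Config C) {Y : Set E} (hY : Y ⊆ C) :
    A.causesSet Y ⊆ C :=
  iUnion₂_subset fun y hy => hC.2.1 y (hY hy)

theorem Config.union_singleton (hA : A.IsAES) (hC : A.Config C) {e : E}
    (hcauses : ∀ z, A.lt z e → z ∈ C) (hout : ∀ c ∈ C, ¬ A.ac e c) : A.Config (C ∪ {e}) := by
  refine ⟨hC.1.union (finite_singleton e), ?_, hC.2.2.union_singleton (hA.ac_irrefl e) hout⟩
  rintro w (hw | rfl) z hz
  · exact mem_union_left _ (hC.2.1 w hw hz)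
  · obtain rfl | hne := eq_or_ne z w
    · exact mem_union_right _ rfl
    · exact mem_union_left _ (hcauses z ⟨hz, hne⟩)

theorem config_toES_iff : A.toES.Config C ↔ A.Config C :=
  ⟨fun h => ⟨h.2.1, fun x hx z hz => h.2.2.1 x hx z (mem_univ z) hz, h.2.2.2⟩,
    fun h => ⟨subset_univ C, h.1, fun x hx _ _ hle => h.2.1 x hx hle, h.2.2⟩⟩

theorem Similar.eq_of_mem_config (hS : A.Similar X) (hC : A.Config C) {a b : E} (ha : a ∈ C)
    (haX : a ∈ X) (hb : b ∈ C) (hbX : b ∈ X) : a = b := by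
  by_contra hne
  exact hC.not_subset_of_setConflict ((hS a haX b hbX).2.1 hne) (pair_subset ha hb)

theorem Similar.ac_all_or_ac_cause (hS : A.Similar X) (hC : A.Config C) {e c : E} (heX : e ∉ X)
    (hc : c ∈ C) (hcX : c ∈ X) (hac : A.ac e c) :
    (∀ x ∈ X, A.ac e x) ∨ ∃ c' ∈ C, c' ∉ X ∧ A.ac e c' ∧ A.lt c' c := by
  by_cases hmu : A.acMu e c
  · exact .inl fun x hx => ((hS c hcX x hx).2.2 e heX).2 hmu
  obtain ⟨c', hac', hlt⟩ : ∃ c', A.ac e c' ∧ A.lt c' c := by simpa [acMu, hac] using hmu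
  have hc' : c' ∈ C := hC.2.1 c hc hlt.1
  exact .inr ⟨c', hc', fun hc'X => hlt.2 (hS.eq_of_mem_config hC hc' hc'X hc hcX), hac', hlt⟩

theorem foldMap_of_mem {e : E} (he : e ∈ X) : foldMap X e = none := by
  simp [foldMap, he]

theorem foldMap_of_notMem {e : E} (he : e ∉ X) : foldMap X e = some e := by
  simp [foldMap, he]

theorem foldMap_mem_foldCarrier (X : Set E) (e : E) : foldMap X e ∈ foldCarrier X := by
  by_cases he : e ∈ X
  · exact .inl (foldMap_of_mem he)
  · exact .inr ⟨e, he, foldMap_of_notMem he⟩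

theorem none_mem_image_foldMap {c : E} (hc : c ∈ C) (hcX : c ∈ X) : none ∈ foldMap X '' C :=
  ⟨c, hc, foldMap_of_mem hcX⟩

theorem some_mem_image_foldMap {c : E} (hc : c ∈ C) (hcX : c ∉ X) : some c ∈ foldMap X '' C :=
  ⟨c, hc, foldMap_of_notMem hcX⟩

theorem mem_of_some_mem_image_foldMap {c : E} (h : some c ∈ foldMap X '' C) : c ∈ C := by
  obtain ⟨a, ha, hac⟩ := h
  by_cases haX : a ∈ X
  · simp [foldMap_of_mem haX] at hac
  · rwa [← Option.some_injective _ ((foldMap_of_notMem haX).symm.trans hac)]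

theorem exists_mem_of_none_mem_image_foldMap (h : none ∈ foldMap X '' C) : ∃ x ∈ C, x ∈ X := by
  obtain ⟨x, hx, hxn⟩ := h
  exact ⟨x, hx, by_contra fun hxX => by simp [foldMap_of_notMem hxX] at hxn⟩

theorem ac_of_foldAc_foldMap {a b : E} (h : A.foldAc X (foldMap X a) (foldMap X b)) :
    A.ac a b := by
  by_cases haX : a ∈ X <;> by_cases hbX : b ∈ X <;>
    simp only [foldMap_of_mem, foldMap_of_notMem, foldAc, haX, hbX, not_false_eq_true] at h
  exacts [h.2 a haX, h.2 b hbX, h.2.2]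

theorem foldLab_foldMap [Inhabited Λ] (hS : A.Similar X) (e : E) :
    A.foldLab X (foldMap X e) = A.lab e := by
  by_cases he : e ∈ X
  · have hne : X.Nonempty := ⟨e, he⟩
    simp only [foldMap_of_mem he, foldLab, dif_pos hne]
    exact (hS _ hne.some_mem e he).1
  · rw [foldMap_of_notMem he]
    rfl

theorem Similar.injOn_foldMap (hS : A.Similar X) (hC : A.Config C) : InjOn (foldMap X) C := by
  intro a ha b hb h
  by_cases haX : a ∈ X <;> by_cases hbX : b ∈ X <;>
    simp only [foldMap_of_mem, foldMap_of_notMem, haX, hbX, not_false_eq_true, reduceCtorEq,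
      Option.some_inj] at h
  exacts [hS.eq_of_mem_config hC ha haX hb hbX, h]

theorem Config.image_foldMap [Inhabited Λ] (hC : A.Config C) :
    (A.foldES X).Config (foldMap X '' C) := by
  refine ⟨?_, hC.1.image _, ?_, hC.2.2.image fun _ _ => ac_of_foldAc_foldMap⟩
  · rintro _ ⟨a, -, rfl⟩
    exact foldMap_mem_foldCarrier X a
  rintro _ ⟨a, ha, rfl⟩ v (rfl | ⟨z, hzX, rfl⟩) hle
  · by_cases haX : a ∈ X
    · exact none_mem_image_foldMap ha haX
    · rw [foldMap_of_notMem haX] at hle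
      obtain ⟨-, x, hxX, hlt⟩ := hle
      exact none_mem_image_foldMap (hC.2.1 a ha hlt.1) hxX
  · by_cases haX : a ∈ X
    · rw [foldMap_of_mem haX] at hle
      exact some_mem_image_foldMap (hC.2.1 a ha (hle a haX).1) hzX
    · rw [foldMap_of_notMem haX] at hle
      exact some_mem_image_foldMap (hC.2.1 a ha hle.2.2) hzX

theorem Similar.reflTransGen_foldAc_some_none (hA : A.IsAES) (hS : A.Similar X)
    (hC : A.Config C) {b : E} (hb : b ∈ C) (hbX : b ∈ X) {a : E} (ha : a ∈ C) (haX : a ∉ X)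
    (hab : A.ac a b) : ReflTransGen (RelRestrict (A.foldAc X) (foldMap X '' C)) (some a) none := by
  induction a using (hC.2.2.wellFounded_flip hC.1).induction with
  | _ a ih =>
    rcases hS.ac_all_or_ac_cause hC haX hb hbX hab with hall | ⟨c, hc, hcX, hac, hcb⟩
    · exact .single ⟨some_mem_image_foldMap ha haX, none_mem_image_foldMap hb hbX, haX, hall⟩
    · exact .head ⟨some_mem_image_foldMap ha haX, some_mem_image_foldMap hc hcX, haX, hcX, hac⟩
        (ih c ⟨ha, hc, hac⟩ hc hcX (hA.lt_ac c b hcb))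

theorem Similar.reflTransGen_foldAc_of_ac (hA : A.IsAES) (hS : A.Similar X) (hC : A.Config C)
    {a b : E} (h : RelRestrict A.ac C a b) :
    ReflTransGen (RelRestrict (A.foldAc X) (foldMap X '' C)) (foldMap X a) (foldMap X b) := by
  obtain ⟨ha, hb, hab⟩ := h
  by_cases haX : a ∈ X <;> by_cases hbX : b ∈ X
  · obtain rfl := hS.eq_of_mem_config hC ha haX hb hbX
    exact absurd hab (hA.ac_irrefl a)
  · rw [foldMap_of_mem haX, foldMap_of_notMem hbX]
    refine .single ⟨none_mem_image_foldMap ha haX, some_mem_image_foldMap hb hbX, hbX,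
      fun x hx => ?_⟩
    exact (((hS a haX x hx).2.2 b hbX).1 hab).resolve_right fun hba =>
      hC.2.2 a (.head ⟨ha, hb, hab⟩ (.single ⟨hb, ha, hba⟩))
  · rw [foldMap_of_notMem haX, foldMap_of_mem hbX]
    exact hS.reflTransGen_foldAc_some_none hA hC hb hbX ha haX hab
  · rw [foldMap_of_notMem haX, foldMap_of_notMem hbX]
    exact .single ⟨some_mem_image_foldMap ha haX, some_mem_image_foldMap hb hbX, haX, hbX, hab⟩

theorem Similar.isPosetIso_foldMap [Inhabited Λ] (hA : A.IsAES) (hS : A.Similar X)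
    (hC : A.Config C) : IsPosetIso A.toES (A.foldES X) C (foldMap X '' C) (foldMap X) := by
  refine ⟨hS.injOn_foldMap hC, rfl, fun e _ => foldLab_foldMap hS e, fun a ha b hb => ⟨?_, ?_⟩⟩
  · exact ReflTransGen.lift' (foldMap X) (fun _ _ => hS.reflTransGen_foldAc_of_ac hA hC) a b
  · intro h
    rcases reflTransGen_iff_eq_or_transGen.mp h with heq | htg
    · rw [hS.injOn_foldMap hC ha hb heq.symm]
    · exact (htg.relRestrict_of_image (fun _ _ => ac_of_foldAc_foldMap) ha hb).to_reflTransGen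

theorem Similar.exists_foldAc_of_ac (hS : A.Similar X) (hC : A.Config C) {e c : E} (heX : e ∉ X)
    (hc : c ∈ C) (hac : A.ac e c) : ∃ v ∈ foldMap X '' C, A.foldAc X (some e) v := by
  by_cases hcX : c ∈ X
  · rcases hS.ac_all_or_ac_cause hC heX hc hcX hac with hall | ⟨c', hc', hc'X, hac', -⟩
    · exact ⟨none, none_mem_image_foldMap hc hcX, heX, hall⟩
    · exact ⟨some c', some_mem_image_foldMap hc' hc'X, heX, hc'X, hac'⟩
  · exact ⟨some c, some_mem_image_foldMap hc hcX, heX, hcX, hac⟩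

theorem Similar.config_union_of_fold_some (hA : A.IsAES) (hS : A.Similar X) (hC : A.Config C)
    {e : E} (heX : e ∉ X)
    (hclosed : ∀ v ∈ foldCarrier X, A.foldLe X v (some e) → v ∈ foldMap X '' C ∪ {some e})
    (hext : ∀ v ∈ foldMap X '' C, ¬ A.foldAc X (some e) v) : A.Config (C ∪ {e}) := by
  have hout : ∀ c ∈ C, ¬ A.ac e c := fun c hc hac =>
    let ⟨v, hv, hev⟩ := hS.exists_foldAc_of_ac hC heX hc hac
    hext v hv hev
  refine hC.union_singleton hA (fun z hz => ?_) hout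
  by_cases hzX : z ∈ X
  · have hnone : none ∈ foldMap X '' C ∪ {some e} := hclosed none (.inl rfl) ⟨heX, z, hzX, hz⟩
    obtain ⟨x, hx, hxX⟩ := exists_mem_of_none_mem_image_foldMap (hnone.resolve_right (by simp))
    obtain rfl | hzx := eq_or_ne z x
    · exact hx
    exact absurd (hA.ac_of_conflict (conflict_of_le ((hS z hzX x hxX).2.1 hzx) hz.1)) (hout x hx)
  · have hsome := hclosed (some z) (.inr ⟨z, hzX, rfl⟩) ⟨hzX, heX, hz.1⟩
    exact mem_of_some_mem_image_foldMap (hsome.resolve_right (by simpa using hz.2))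

theorem Combinable.exists_config_union_of_fold_none (hA : A.IsAES) (hX : A.Combinable X)
    (hC : A.Config C) (hCX : ∀ x ∈ X, x ∉ C)
    (hclosed : ∀ v ∈ foldCarrier X, A.foldLe X v none → v ∈ foldMap X '' C ∪ {none})
    (hext : ∀ v ∈ foldMap X '' C, ¬ A.foldAc X none v) : ∃ x ∈ X, A.Config (C ∪ {x}) := by
  obtain ⟨hS, hcomb⟩ := hX
  obtain ⟨x, hxX, hxY, h, hh, hsub⟩ :=
    hcomb (A.weakPred X ∩ C) inter_subset_left (hC.consistentSet inter_subset_right)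
  have hSC : A.strictCauses X ⊆ C := fun s hs =>
    have hsX : s ∉ X := fun hsX => (hs s hsX).2 rfl
    mem_of_some_mem_image_foldMap
      ((hclosed (some s) (.inr ⟨s, hsX, rfl⟩) hs).resolve_right (by simp))
  have hYC : A.causesSet (A.weakPred X ∩ C) ⊆ C := hC.causesSet_subset inter_subset_right
  have hout : ∀ c ∈ C, ¬ A.ac x c := by
    intro c hc hac
    have hcX : c ∉ X := fun hcX => hCX c hcX hc
    obtain ⟨x₀, hx₀X, hnac⟩ : ∃ x₀ ∈ X, ¬ A.ac x₀ c := by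
      by_contra! hall
      exact hext (some c) (some_mem_image_foldMap hc hcX) ⟨hcX, hall⟩
    have hcx : A.ac c x := (((hS x hxX x₀ hx₀X).2.2 c hcX).1 hac).resolve_left hnac
    have hcW : c ∈ A.weakPred X := by
      refine ⟨⟨x, hxX, x₀, hx₀X, hcx, hnac⟩, ?_⟩
      rintro (hcS | hcX')
      · exact hA.ac_irrefl x (hA.ac_heredity x c x hac (hcS x hxX))
      · exact hcX hcX'
    exact hxY c ⟨hcW, hc⟩ hac
  refine ⟨x, hxX, hC.union_singleton hA (fun z hz => ?_) hout⟩
  exact (hsub (hA.mem_hist_diff_of_lt hh hz)).elim (hSC ·) (hYC ·)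

theorem Combinable.exists_config_union_of_fold [Inhabited Λ] (hA : A.IsAES)
    (hX : A.Combinable X) (hC : A.Config C) {u : Option E} (hu : u ∈ foldCarrier X)
    (hext : (A.foldES X).Extends (foldMap X '' C) (foldMap X '' C ∪ {u}))
    (hcfg : (A.foldES X).Config (foldMap X '' C ∪ {u})) :
    ∃ e, foldMap X e = u ∧ A.Config (C ∪ {e}) := by
  by_cases huC : u ∈ foldMap X '' C
  · obtain ⟨e, he, rfl⟩ := huC
    exact ⟨e, rfl, by rwa [union_singleton, insert_eq_of_mem he]⟩
  have hext' : ∀ v ∈ foldMap X '' C, ¬ A.foldAc X u v :=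
    fun v hv => hext.2 v hv u (mem_union_right _ rfl) huC
  have hclosed := fun v hv hle => hcfg.2.2.1 u (mem_union_right _ rfl) v hv hle
  rcases hu with rfl | ⟨e, heX, rfl⟩
  · obtain ⟨x, hxX, hx⟩ := hX.exists_config_union_of_fold_none hA hC
      (fun x hxX hxC => huC (none_mem_image_foldMap hxC hxX)) hclosed hext'
    exact ⟨x, foldMap_of_mem hxX, hx⟩
  · exact ⟨e, foldMap_of_notMem heX, hX.1.config_union_of_fold_some hA hC heX hclosed hext'⟩

def foldBisim (A : AES E Λ) (X : Set E) : Set (Set E × (E → Option E) × Set (Option E)) :=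
  (fun C => (C, foldMap X, foldMap X '' C)) '' {C | A.Config C}

theorem mem_foldBisim_union {e : E} (hC : A.Config (C ∪ {e})) :
    (C ∪ {e}, foldMap X, foldMap X '' C ∪ {foldMap X e}) ∈ foldBisim A X :=
  ⟨_, hC, by simp only [image_union, image_singleton]⟩

end AES

open AES in
/-- an AES and its folding on a combinable set of events are
history preserving bisimilar. -/
theorem aes_folding_hp_bisimilar
    {E Λ : Type*} [Inhabited Λ] (A : AES E Λ) (hA : A.IsAES)
    (X : Set E) (hX : A.Combinable X) :
    ∃ R : Set (Set E × (E → Option E) × Set (Option E)),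
      IsHpBisim A.toES (A.foldES X) R := by
  refine ⟨foldBisim A X, ?_, ⟨foldMap X, ∅, ?_, by simp⟩, ?_⟩
  · rintro _ ⟨C, hC, rfl⟩
    exact ⟨config_toES_iff.mpr hC, hC.image_foldMap, hX.1.isPosetIso_foldMap hA hC⟩
  · exact ⟨finite_empty, by simp, fun x hx => by simpa using (transGen_relRestrict_mem hx).1⟩
  rintro C₁ g C₂ ⟨C, hC, hCg⟩
  obtain ⟨rfl, rfl, rfl⟩ := Prod.mk.injEq _ _ _ _ ▸ hCg
  refine ⟨fun e _ _ hcfg => ?_, fun u hu hext hcfg => ?_⟩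
  · exact ⟨foldMap X e, foldMap_mem_foldCarrier X e, foldLab_foldMap hX.1 e, foldMap X,
      fun _ _ => rfl, mem_foldBisim_union (config_toES_iff.mp hcfg)⟩
  · obtain ⟨e, rfl, he⟩ := hX.exists_config_union_of_fold hA hC hu hext hcfg
    exact ⟨e, mem_univ e, (foldLab_foldMap hX.1 e).symm, foldMap X, fun _ _ => rfl,
      mem_foldBisim_union he⟩
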